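/- Under uniform label noise with rate τ, the noisy expected margin loss decomposes as E_{X,Ỹ} ψ(Ỹ f(X)) = (1 - 2τ)·E_{X,Y} ψ(Y f(X)) + τ·E_X[ψ(f(X)) + ψ(-f(X))]. In particular, if ψ(t) + ψ(-t) = K for a constant K, the noisy risk equals (1-2τ) times the clean risk plus the constant τK, so the minimizers of clean and noisy risk coincide when τ < 1/2. -/

import Mathlib

open MeasureTheory

/-! The noisy class-probability `(1 - τ) p + τ (1 - p)` is the affine image `(1 - 2τ) p + τ`, so
the noisy conditional risk is `(1 - 2τ)` times the clean one plus `τ (ψ(f) + ψ(-f))`. For a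
symmetric loss the second term is the constant `τ K`, and for `τ < 1/2` the noisy risk is an
increasing affine function of the clean one, which therefore has the same minimizers. -/

theorem noisy_weights_mix (τ p a b : ℝ) :
    ((1 - τ) * p + τ * (1 - p)) * a + ((1 - τ) * (1 - p) + τ * p) * b =
      (1 - 2 * τ) * (p * a + (1 - p) * b) + τ * (a + b) := by
  ring

theorem integral_noisy_risk_eq {X : Type*} [MeasurableSpace X] {μ : Measure X} (τ : ℝ)
    {p a b : X → ℝ} (hpa : Integrable (fun x => p x * a x) μ)
    (hpb : Integrable (fun x => (1 - p x) * b x) μ) (hab : Integrable (fun x => a x + b x) μ) :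
    ∫ x, (((1 - τ) * p x + τ * (1 - p x)) * a x + ((1 - τ) * (1 - p x) + τ * p x) * b x) ∂μ =
      (1 - 2 * τ) * ∫ x, (p x * a x + (1 - p x) * b x) ∂μ + τ * ∫ x, (a x + b x) ∂μ := by
  have hmix : Integrable (fun x => p x * a x + (1 - p x) * b x) μ := hpa.add hpb
  simp only [noisy_weights_mix]
  rw [integral_add (hmix.const_mul _) (hab.const_mul _), integral_const_mul,
    integral_const_mul]

theorem minimizers_eq_of_eq_mul_add {α : Type*} {C N : α → ℝ} {c d : ℝ} (hc : 0 < c)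
    (h : ∀ f, N f = c * C f + d) (g : α) :
    (∀ f, N g ≤ N f) ↔ ∀ f, C g ≤ C f := by
  simp only [h, add_le_add_iff_right, mul_le_mul_iff_right₀ hc]

theorem uniform_noise_risk_decomposition_general
    {X : Type*} [MeasurableSpace X] (μ : Measure X) [IsProbabilityMeasure μ]
    (τ : ℝ) (hτ : τ < 1/2) (η : X → ℝ)
    (ψ : ℝ → ℝ) (K : ℝ) (hK : ∀ t, ψ t + ψ (-t) = K)
    (cleanRisk noisyRisk : (X → ℝ) → ℝ)
    (hclean : ∀ f, cleanRisk f =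
      ∫ x, (η x * ψ (f x) + (1 - η x) * ψ (-(f x))) ∂μ)
    (hnoisy : ∀ f, noisyRisk f =
      ∫ x, (((1 - τ) * η x + τ * (1 - η x)) * ψ (f x) +
            ((1 - τ) * (1 - η x) + τ * η x) * ψ (-(f x))) ∂μ)
    (hint : ∀ f : X → ℝ, Integrable (fun x => η x * ψ (f x)) μ ∧
                 Integrable (fun x => (1 - η x) * ψ (-(f x))) μ) :
    (∀ p a b : ℝ, p ∈ Set.Icc (0:ℝ) 1 →
        ((1 - τ) * p + τ * (1 - p)) * a + ((1 - τ) * (1 - p) + τ * p) * b =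
          (1 - 2*τ) * (p * a + (1 - p) * b) + τ * (a + b)) ∧
    (∀ f, noisyRisk f = (1 - 2*τ) * cleanRisk f + τ * K) ∧
    (∀ g, (∀ f, noisyRisk g ≤ noisyRisk f) ↔ (∀ f, cleanRisk g ≤ cleanRisk f)) := by
  have decomposition : ∀ f, noisyRisk f = (1 - 2*τ) * cleanRisk f + τ * K := by
    intro f
    have hsymm : (fun x => ψ (f x) + ψ (-(f x))) = fun _ => K := funext fun x => hK (f x)
    have hsymm_int : Integrable (fun x => ψ (f x) + ψ (-(f x))) μ := by
      rw [hsymm]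
      exact integrable_const K
    rw [hnoisy, hclean, integral_noisy_risk_eq τ (hint f).1 (hint f).2 hsymm_int, hsymm,
      integral_const, probReal_univ, one_smul]
  exact ⟨fun p a b _ => noisy_weights_mix τ p a b, decomposition,
    minimizers_eq_of_eq_mul_add (by linarith) decomposition⟩

/-- Under uniform label noise with rate τ, the noisy risk decomposes as
(1-2τ)·(clean risk) + τ·E[ψ(f(X)) + ψ(-f(X))]; with a symmetric loss
ψ(t) + ψ(-t) = K this is (1-2τ)·(clean risk) + τK, so for τ < 1/2 the
minimizers of the clean and noisy risks coincide. -/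
theorem uniform_noise_risk_decomposition
    {X : Type*} [MeasurableSpace X] (μ : Measure X) [IsProbabilityMeasure μ]
    (τ : ℝ) (hτ : τ < 1/2) (η : X → ℝ) (hη : ∀ x, η x ∈ Set.Icc (0:ℝ) 1)
    (ψ : ℝ → ℝ) (K : ℝ) (hK : ∀ t, ψ t + ψ (-t) = K)
    (cleanRisk noisyRisk : (X → ℝ) → ℝ)
    (hclean : ∀ f, cleanRisk f =
      ∫ x, (η x * ψ (f x) + (1 - η x) * ψ (-(f x))) ∂μ)
    (hnoisy : ∀ f, noisyRisk f =
      ∫ x, (((1 - τ) * η x + τ * (1 - η x)) * ψ (f x) +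
            ((1 - τ) * (1 - η x) + τ * η x) * ψ (-(f x))) ∂μ)
    (hint : ∀ f : X → ℝ, Integrable (fun x => η x * ψ (f x)) μ ∧
                 Integrable (fun x => (1 - η x) * ψ (-(f x))) μ) :
    (∀ p a b : ℝ, p ∈ Set.Icc (0:ℝ) 1 →
        ((1 - τ) * p + τ * (1 - p)) * a + ((1 - τ) * (1 - p) + τ * p) * b =
          (1 - 2*τ) * (p * a + (1 - p) * b) + τ * (a + b)) ∧
    (∀ f, noisyRisk f = (1 - 2*τ) * cleanRisk f + τ * K) ∧
    (∀ g, (∀ f, noisyRisk g ≤ noisyRisk f) ↔ (∀ f, cleanRisk g ≤ cleanRisk f)) :=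
  uniform_noise_risk_decomposition_general μ τ hτ η ψ K hK cleanRisk noisyRisk hclean hnoisy hint
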